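/- Symplectic version of the Cleaning Lemma: Let V = F_2^{2n} with the standard symplectic form, S ⊆ V an isotropic subspace, L = S^⊥ its symplectic complement, and U ⊆ [n] a subset of the n coordinate pairs; let V_U be the subspace of vectors supported on U. Then either L ∩ V_U ⊄ S (a nontrivial logical supported in U exists), or every coset of L/S contains an element of L ∩ V_{U^c}, i.e., L = S + (L ∩ V_{U^c}). -/

import Mathlib

/-- A Pauli operator on `n` qubits, modulo phase, represented symplectically:
an X-part and a Z-part, each a vector in `F₂ⁿ`. -/
abbrev PauliVec (n : ℕ) := (Fin n → ZMod 2) × (Fin n → ZMod 2)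

/-- The standard symplectic form on `F₂^{2n}`: two Pauli operators commute
iff the form vanishes. -/
def sympForm {n : ℕ} (u v : PauliVec n) : ZMod 2 :=
  ∑ i : Fin n, (u.1 i * v.2 i + u.2 i * v.1 i)

/-- Support of a Pauli operator: the qubits on which it acts nontrivially. -/
def psupp {n : ℕ} (u : PauliVec n) : Finset (Fin n) :=
  Finset.univ.filter fun i => u.1 i ≠ 0 ∨ u.2 i ≠ 0

/-- Restriction of a Pauli operator to a subset `U` of qubits (identity elsewhere). -/
def prestrict {n : ℕ} (u : PauliVec n) (U : Finset (Fin n)) : PauliVec n :=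
  (fun i => if i ∈ U then u.1 i else 0, fun i => if i ∈ U then u.2 i else 0)

lemma sympForm_comm {n : ℕ} (u v : PauliVec n) : sympForm u v = sympForm v u := by
  unfold sympForm; congr 1; ext i; ring

/-- The symplectic form as a bilinear form. -/
def sympBilin (n : ℕ) : LinearMap.BilinForm (ZMod 2) (PauliVec n) :=
  LinearMap.mk₂ (ZMod 2) sympForm
    (by intro u u' v; simp [sympForm, ← Finset.sum_add_distrib]; congr 1; ext i; ring)
    (by intro a u v; simp [sympForm, Finset.mul_sum]; congr 1; ext i; ring)
    (by intro u v v'; simp [sympForm, ← Finset.sum_add_distrib]; congr 1; ext i; ring)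
    (by intro a u v; simp [sympForm, Finset.mul_sum]; congr 1; ext i; ring)

lemma sympBilin_nondeg (n : ℕ) : (sympBilin n).Nondegenerate := by
  suffices hL : LinearMap.SeparatingLeft (sympBilin n) by
    refine ⟨hL, fun v hv => hL v fun u => ?_⟩
    show sympForm v u = 0
    rw [sympForm_comm]; exact hv u
  intro u hu
  have h1 : ∀ i, u.1 i = 0 := by
    intro i
    have := hu (0, Pi.single i 1)
    simpa [sympBilin, sympForm, Pi.single_apply, Finset.sum_ite_eq'] using this
  have h2 : ∀ i, u.2 i = 0 := by
    intro i
    have := hu (Pi.single i 1, 0)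
    simpa [sympBilin, sympForm, Pi.single_apply, Finset.sum_ite_eq'] using this
  ext i <;> simp [h1, h2]

lemma exists_perp {n : ℕ} (W : Submodule (ZMod 2) (PauliVec n)) (x : PauliVec n)
    (hx : x ∉ W) : ∃ u, (∀ w ∈ W, sympForm u w = 0) ∧ sympForm u x ≠ 0 := by
  obtain ⟨f, hf1, hf2⟩ := W.exists_dual_map_eq_bot_of_notMem hx inferInstance
  obtain ⟨u, hu⟩ := ((sympBilin n).toDual (sympBilin_nondeg n)).surjective f
  refine ⟨u, fun w hw => ?_, by
    have : (sympBilin n) u x ≠ 0 := by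
      rw [show (sympBilin n) u x = f x from congrFun (congrArg _ hu) x]; exact hf1
    simpa [sympBilin] using this⟩
  have hfw : f w = 0 := by
    have := Submodule.mem_map_of_mem (f := f) hw
    rw [hf2] at this; simpa using this
  have : (sympBilin n) u w = 0 := by
    rw [show (sympBilin n) u w = f w from congrFun (congrArg _ hu) w]; exact hfw
  simpa [sympBilin] using this

lemma sympForm_prestrict {n : ℕ} (u w : PauliVec n) (U : Finset (Fin n)) :
    sympForm (prestrict u U) w = sympForm u (prestrict w U) := by
  unfold sympForm prestrict; congr 1; ext i; dsimp; split <;> simp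

lemma sympForm_sub_left {n : ℕ} (u u' v : PauliVec n) :
    sympForm (u - u') v = sympForm u v - sympForm u' v := by
  show (sympBilin n) (u - u') v = (sympBilin n) u v - (sympBilin n) u' v
  simp

/-- Restriction as a linear map. -/
def prestrictLin (n : ℕ) (U : Finset (Fin n)) : PauliVec n →ₗ[ZMod 2] PauliVec n where
  toFun u := prestrict u U
  map_add' := by intro u v; unfold prestrict; ext i <;> dsimp <;> split <;> simp
  map_smul' := by intro a v; unfold prestrict; ext i <;> dsimp <;> split <;> simp

/-- Symplectic Cleaning Lemma: let `S ⊆ F₂^{2n}` be an isotropic subspace,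
`L = S^⊥` its symplectic complement, and `U ⊆ [n]`.  If every element of `L`
supported in `U` lies in `S` (no nontrivial logical supported in `U`), then
`L = S + (L ∩ V_{Uᶜ})`: every element of `L` is the sum of a stabilizer and an
element of `L` supported in the complement of `U`. -/
theorem stmt11_symplectic_cleaning {n : ℕ}
    (S : Submodule (ZMod 2) (PauliVec n))
    (hiso : ∀ s ∈ S, ∀ s' ∈ S, sympForm s s' = 0)
    (U : Finset (Fin n))
    (htriv : ∀ v : PauliVec n, (∀ s ∈ S, sympForm v s = 0) → psupp v ⊆ U → v ∈ S) :
    ∀ v : PauliVec n, (∀ s ∈ S, sympForm v s = 0) →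
      ∃ s ∈ S, ∃ w : PauliVec n, (∀ s' ∈ S, sympForm w s' = 0) ∧
        psupp w ⊆ Uᶜ ∧ v = s + w := by
  intro v hv
  set W : Submodule (ZMod 2) (PauliVec n) := S.map (prestrictLin n U) with hW
  have hkey : prestrict v U ∈ W := by
    by_contra hx
    obtain ⟨u, huW, hux⟩ := exists_perp W (prestrict v U) hx
    set u' := prestrict u U with hu'
    have hu'S : u' ∈ S := by
      apply htriv
      · intro s hs
        rw [hu', sympForm_prestrict]
        exact huW _ (Submodule.mem_map_of_mem hs)
      · intro i hi
        simp only [psupp, Finset.mem_filter] at hi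
        by_contra hiU
        rcases hi.2 with h | h <;> simp [hu', prestrict, hiU] at h
    have h0 : sympForm u' v = 0 := by rw [sympForm_comm]; exact hv u' hu'S
    rw [hu', sympForm_prestrict] at h0
    exact hux h0
  obtain ⟨s, hsS, hsv⟩ := hkey
  have hsv : prestrict s U = prestrict v U := hsv
  refine ⟨s, hsS, v - s, ?_, ?_, by abel⟩
  · intro s' hs'
    rw [sympForm_sub_left, hv s' hs', hiso s hsS s' hs', sub_zero]
  · intro i hi
    simp only [psupp, Finset.mem_filter] at hi
    simp only [Finset.mem_compl]
    intro hiU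
    have h1 : s.1 i = v.1 i := by
      have := congrFun (congrArg Prod.fst hsv) i
      simpa [prestrict, hiU] using this
    have h2 : s.2 i = v.2 i := by
      have := congrFun (congrArg Prod.snd hsv) i
      simpa [prestrict, hiU] using this
    rcases hi.2 with h | h
    · exact h (by simp [Prod.fst_sub, h1])
    · exact h (by simp [Prod.snd_sub, h2])
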